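/- arXiv:2308.15505 — 4 statements merged into one kernel-verified Lean document; each statement's English description precedes it below -/
import Mathlib

section
/- Let k be an algebraically closed field of characteristic 0, let a, b ∈ k be nonzero, and let n, m ≥ 1 and r, s ≥ 0 be integers such that nm − rm − sn ≠ 0. Then the polynomial X^n + a·X^r·Y^s + b·Y^m is irreducible in the polynomial ring k[X, Y]. -/
open Polynomial in
noncomputable def subst2 {k : Type*} [CommSemiring k] (α β : ℕ) :
    MvPolynomial (Fin 2) k →+* Polynomial (Polynomial k) :=
  MvPolynomial.eval₂Hom (Polynomial.C.comp Polynomial.C)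
    ![Polynomial.C Polynomial.X * Polynomial.X ^ α, Polynomial.X ^ β]

open Polynomial in
lemma subst2_monomial {k : Type*} [CommSemiring k] (α β : ℕ) (d : Fin 2 →₀ ℕ) (c : k) :
    subst2 α β (MvPolynomial.monomial d c)
      = Polynomial.C (Polynomial.C c * Polynomial.X ^ (d 0)) *
        Polynomial.X ^ (α * (d 0) + β * (d 1)) := by
  simp only [subst2, MvPolynomial.eval₂Hom_monomial]
  rw [Finsupp.prod_fintype _ _ (fun i => pow_zero _), Fin.prod_univ_two]
  simp only [Matrix.cons_val_zero, Matrix.cons_val_one, Matrix.head_cons, RingHom.coe_comp,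
    Function.comp_apply]
  rw [mul_pow, ← pow_mul, ← pow_mul, ← C_pow, map_mul, map_pow]
  ring

open Polynomial in
lemma subst2_coeff {k : Type*} [CommRing k] (α β : ℕ) (hβ : 1 ≤ β)
    (P : MvPolynomial (Fin 2) k) (i j : ℕ) :
    ((subst2 α β P).coeff (α * i + β * j)).coeff i
      = MvPolynomial.coeff (Finsupp.single 0 i + Finsupp.single 1 j) P := by
  set D0 : Fin 2 →₀ ℕ := Finsupp.single 0 i + Finsupp.single 1 j with hD0
  have hD00 : D0 0 = i := by simp [hD0, Finsupp.single_apply]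
  have hD01 : D0 1 = j := by simp [hD0, Finsupp.single_apply]
  conv_lhs => rw [P.as_sum]
  rw [map_sum]
  simp_rw [subst2_monomial, Polynomial.C_mul_X_pow_eq_monomial, Polynomial.finset_sum_coeff,
    Polynomial.coeff_monomial]
  rw [Finset.sum_eq_single D0]
  · rw [hD00, hD01, if_pos rfl, Polynomial.coeff_monomial, if_pos rfl]
  · intro d _ hd
    split_ifs with h
    · rw [Polynomial.coeff_monomial]
      rw [if_neg]
      intro hdi
      apply hd
      have hj : d 1 = j := by
        have h2 := h
        rw [hdi] at h2
        exact Nat.eq_of_mul_eq_mul_left (by omega) (Nat.add_left_cancel h2)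
      ext x
      fin_cases x
      · simpa using hdi.trans hD00.symm
      · simpa using hj.trans hD01.symm
    · simp
  · intro hD0n
    rw [MvPolynomial.notMem_support_iff.mp hD0n]
    split_ifs with h
    · simp
    · simp

open Polynomial in
lemma subst2_trinomial {k : Type*} [CommRing k] (α β : ℕ) (a b : k) (n m r s : ℕ) :
    subst2 α β (MvPolynomial.X 0 ^ n + MvPolynomial.C a * MvPolynomial.X 0 ^ r *
        MvPolynomial.X 1 ^ s + MvPolynomial.C b * MvPolynomial.X 1 ^ m)
      = Polynomial.C ((Polynomial.X : Polynomial k) ^ n) * Polynomial.X ^ (α * n)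
        + Polynomial.C (Polynomial.C a * Polynomial.X ^ r) * Polynomial.X ^ (α * r + β * s)
        + Polynomial.C (Polynomial.C b) * Polynomial.X ^ (β * m) := by
  simp only [subst2, map_add, map_mul, map_pow, MvPolynomial.eval₂Hom_X',
    MvPolynomial.eval₂Hom_C, Matrix.cons_val_zero, Matrix.cons_val_one, Matrix.head_cons,
    RingHom.coe_comp, Function.comp_apply]
  rw [mul_pow, mul_pow, ← pow_mul, ← pow_mul, ← pow_mul, ← pow_mul, ← C_pow, ← C_pow]
  push_cast
  ring

open Polynomial in
lemma binom_irred {R : Type*} [CommRing R] [IsDomain R] (e0 c0 q : R)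
    (hq : Prime q) (hqc : q ∣ c0) (hq2 : ¬ (q * q ∣ c0)) (hqe : ¬ q ∣ e0)
    (hprim : ∀ p : R, p ∣ e0 → p ∣ c0 → IsUnit p) (D : ℕ) (hD : 1 ≤ D)
    (he0 : e0 ≠ 0) :
    Irreducible (Polynomial.C e0 * Polynomial.X ^ D + Polynomial.C c0) := by
  set W : Polynomial R := Polynomial.C e0 * Polynomial.X ^ D + Polynomial.C c0 with hW
  have hdegW : W.degree = D := by
    rw [hW, degree_add_eq_left_of_degree_lt, degree_C_mul_X_pow _ he0]
    rw [degree_C_mul_X_pow _ he0]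
    calc (Polynomial.C c0).degree ≤ 0 := degree_C_le
    _ < D := by exact_mod_cast WithBot.coe_lt_coe.mpr (by omega)
  have hcoeff : ∀ v, W.coeff v = (if v = D then e0 else 0) + (if v = 0 then c0 else 0) := by
    intro v
    rw [hW, Polynomial.coeff_add, Polynomial.coeff_C_mul_X_pow, Polynomial.coeff_C]
  have hnatdegW : W.natDegree = D := natDegree_eq_of_degree_eq_some hdegW
  apply Polynomial.irreducible_of_eisenstein_criterion
    ((Ideal.span_singleton_prime hq.ne_zero).mpr hq)
  · rw [Polynomial.leadingCoeff, hnatdegW, hcoeff, if_pos rfl, if_neg (by omega), add_zero]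
    rw [Ideal.mem_span_singleton]
    exact hqe
  · intro v hv
    rw [hdegW] at hv
    have hvD : v ≠ D := by
      intro h
      subst h
      exact absurd hv (lt_irrefl _)
    rw [hcoeff, if_neg hvD]
    rw [Ideal.mem_span_singleton]
    rcases eq_or_ne v 0 with rfl | hv0
    · simpa using hqc
    · simp [hv0]
  · rw [hdegW]
    exact_mod_cast WithBot.coe_lt_coe.mpr (by omega)
  · rw [hcoeff, if_neg (by omega), if_pos rfl, zero_add, Ideal.span_singleton_pow,
      Ideal.mem_span_singleton, pow_two]
    exact hq2
  · intro r hr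
    rw [Polynomial.C_dvd_iff_dvd_coeff] at hr
    have h1 := hr D
    have h2 := hr 0
    rw [hcoeff, if_pos rfl, if_neg (by omega), add_zero] at h1
    rw [hcoeff, if_neg (by omega), if_pos rfl, zero_add] at h2
    exact hprim r h1 h2

open Polynomial in
lemma eq_C_mul_X_pow_of_trailing {R : Type*} [CommRing R] (p : Polynomial R) (hp : p ≠ 0)
    (h : p.natTrailingDegree = p.natDegree) :
    p = Polynomial.C (p.coeff p.natDegree) * Polynomial.X ^ p.natDegree := by
  ext v
  rw [Polynomial.coeff_C_mul_X_pow]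
  rcases lt_trichotomy v p.natDegree with hv | rfl | hv
  · rw [if_neg (by omega), Polynomial.coeff_eq_zero_of_lt_natTrailingDegree (by omega)]
  · rw [if_pos rfl]
  · rw [if_neg (by omega), Polynomial.coeff_eq_zero_of_natDegree_lt hv]

open Polynomial in
lemma exists_good_prime {k : Type*} [Field k] [CharZero k] (N : ℕ) (hN : 1 ≤ N) (cc : k)
    (hcc : cc ≠ 0) :
    ∃ q : Polynomial k, Prime q ∧ q ∣ (Polynomial.X ^ N + Polynomial.C cc) ∧
      ¬ (q * q ∣ (Polynomial.X ^ N + Polynomial.C cc)) ∧ ¬ (q ∣ Polynomial.X) := by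
  set f : Polynomial k := Polynomial.X ^ N + Polynomial.C cc with hf
  have hmon : f.Monic := monic_X_pow_add_C _ (by omega)
  have hfne : f ≠ 0 := hmon.ne_zero
  have hfdeg : f.natDegree = N := natDegree_X_pow_add_C
  have hfnu : ¬ IsUnit f := not_isUnit_of_natDegree_pos f (by omega)
  obtain ⟨q, hqirr, hqdvd⟩ := WfDvdMonoid.exists_irreducible_factor hfnu hfne
  have hqprime : Prime q := hqirr.prime
  have hsq : Squarefree f := by
    have hsep : Separable (Polynomial.X ^ N - Polynomial.C (-cc)) :=
      separable_X_pow_sub_C (-cc) (by exact_mod_cast Nat.cast_ne_zero.mpr (by omega))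
        (neg_ne_zero.mpr hcc)
    rw [map_neg, sub_neg_eq_add] at hsep
    exact hsep.squarefree
  refine ⟨q, hqprime, hqdvd, fun h2 => hqirr.not_isUnit (hsq q h2), fun hqX => ?_⟩
  have hq1 : q ∣ Polynomial.C cc := by
    have hx : q ∣ Polynomial.X ^ N := hqX.trans (dvd_pow_self _ (by omega))
    have := dvd_sub hqdvd hx
    simpa [hf] using this
  exact hqirr.not_isUnit (isUnit_of_dvd_unit hq1 (Polynomial.isUnit_C.mpr hcc.isUnit))

lemma scale_eval {k : Type*} [CommRing k] (α β w : ℕ) (H : MvPolynomial (Fin 2) k)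
    (hsupp : ∀ d ∈ H.support, α * d 0 + β * d 1 = w) (x0 y0 lam : k) :
    MvPolynomial.eval ![lam ^ α * x0, lam ^ β * y0] H
      = lam ^ w * MvPolynomial.eval ![x0, y0] H := by
  rw [MvPolynomial.eval_eq', MvPolynomial.eval_eq', Finset.mul_sum]
  apply Finset.sum_congr rfl
  intro d hd
  rw [Fin.prod_univ_two, Fin.prod_univ_two]
  simp only [Matrix.cons_val_zero, Matrix.cons_val_one, Matrix.head_cons]
  rw [mul_pow, mul_pow, ← pow_mul, ← pow_mul, ← hsupp d hd, pow_add]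
  ring

open Polynomial in
lemma aux_main {k : Type*} [Field k] [IsAlgClosed k] (α β E1 : ℕ) (hβ : 1 ≤ β)
    (F G H : MvPolynomial (Fin 2) k) (W : Polynomial (Polynomial k)) (hirr : Irreducible W)
    (hFGH : F = G * H)
    (hsubst : subst2 α β F = Polynomial.X ^ E1 * W)
    (hWdvd : W ∣ subst2 α β G)
    (hFy : MvPolynomial.eval₂ Polynomial.C ![Polynomial.X, 0] F ≠ 0)
    (hFx : MvPolynomial.eval₂ Polynomial.C ![0, Polynomial.X] F ≠ 0) :
    IsUnit H ∨ ∃ x0 : k, x0 ≠ 0 ∧ ∀ lam : k,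
      MvPolynomial.eval ![lam ^ α * x0, lam ^ β] F = 0 := by
  have hWne : W ≠ 0 := hirr.ne_zero
  set sH := subst2 α β H with hsHdef
  have hmul : subst2 α β G * sH = Polynomial.X ^ E1 * W := by
    rw [hsHdef, ← map_mul, ← hFGH, hsubst]
  obtain ⟨g', hg'⟩ := hWdvd
  have hKey : g' * sH = Polynomial.X ^ E1 := by
    apply mul_left_cancel₀ hWne
    rw [← mul_assoc, ← hg', hmul, mul_comm]
  have hXE1ne : (Polynomial.X ^ E1 : Polynomial (Polynomial k)) ≠ 0 :=
    pow_ne_zero _ Polynomial.X_ne_zero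
  have hsHne : sH ≠ 0 := by
    intro h; rw [h, mul_zero] at hKey; exact hXE1ne hKey.symm
  have hg'ne : g' ≠ 0 := by
    intro h; rw [h, zero_mul] at hKey; exact hXE1ne hKey.symm
  have hdeg : g'.natDegree + sH.natDegree = E1 := by
    rw [← Polynomial.natDegree_mul hg'ne hsHne, hKey, Polynomial.natDegree_X_pow]
  have htr : g'.natTrailingDegree + sH.natTrailingDegree = E1 := by
    rw [← Polynomial.natTrailingDegree_mul hg'ne hsHne, hKey,
      Polynomial.natTrailingDegree_X_pow]
  have hle1 := Polynomial.natTrailingDegree_le_natDegree g'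
  have hle2 := Polynomial.natTrailingDegree_le_natDegree sH
  set w := sH.natDegree with hwdef
  have hweq : sH.natTrailingDegree = w := by omega
  set γ0 := sH.coeff w with hγ0def
  have hsH : sH = Polynomial.C γ0 * Polynomial.X ^ w :=
    eq_C_mul_X_pow_of_trailing sH hsHne hweq
  have hsupp : ∀ d ∈ H.support, α * d 0 + β * d 1 = w := by
    intro d hd
    by_contra hne
    have hc := subst2_coeff α β hβ H (d 0) (d 1)
    have hd2 : (Finsupp.single 0 (d 0) + Finsupp.single 1 (d 1) : Fin 2 →₀ ℕ) = d := by
      ext x; fin_cases x <;> simp [Finsupp.single_apply]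
    rw [hd2] at hc
    rw [← hsHdef, hsH, Polynomial.coeff_C_mul_X_pow, if_neg hne] at hc
    simp only [Polynomial.coeff_zero] at hc
    exact MvPolynomial.mem_support_iff.mp hd hc.symm
  by_cases hconst : ∀ d ∈ H.support, d = 0
  · left
    have hHC : H = MvPolynomial.C (MvPolynomial.coeff 0 H) := by
      ext d
      rcases eq_or_ne d 0 with rfl | hdne
      · simp
      · have hz : MvPolynomial.coeff d H = 0 := by
          by_contra hcd
          exact hdne (hconst d (MvPolynomial.mem_support_iff.mpr hcd))
        simp [hz, MvPolynomial.coeff_C, hdne, Ne.symm hdne]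
    have hHne : H ≠ 0 := by
      intro h; rw [h, map_zero] at hsHdef; exact hsHne hsHdef
    have hc0 : MvPolynomial.coeff 0 H ≠ 0 := by
      intro h; rw [h, map_zero] at hHC; exact hHne hHC
    rw [hHC]
    exact hc0.isUnit.map MvPolynomial.C
  · right
    push_neg at hconst
    obtain ⟨dnz, hdnzmem, hdnzne⟩ := hconst
    have hdy : ∃ d ∈ H.support, d 1 = 0 := by
      by_contra hno
      push_neg at hno
      have hzero : MvPolynomial.eval₂ Polynomial.C ![Polynomial.X, 0] H = 0 := by
        rw [MvPolynomial.eval₂_eq']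
        apply Finset.sum_eq_zero
        intro d hd
        rw [Fin.prod_univ_two]
        simp only [Matrix.cons_val_zero, Matrix.cons_val_one, Matrix.head_cons]
        rw [zero_pow (hno d hd), mul_zero, mul_zero]
      apply hFy
      rw [hFGH, MvPolynomial.eval₂_mul, hzero, mul_zero]
    have hdx : ∃ d ∈ H.support, d 0 = 0 := by
      by_contra hno
      push_neg at hno
      have hzero : MvPolynomial.eval₂ Polynomial.C ![0, Polynomial.X] H = 0 := by
        rw [MvPolynomial.eval₂_eq']
        apply Finset.sum_eq_zero
        intro d hd
        rw [Fin.prod_univ_two]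
        simp only [Matrix.cons_val_zero, Matrix.cons_val_one, Matrix.head_cons]
        rw [zero_pow (hno d hd), zero_mul, mul_zero]
      apply hFx
      rw [hFGH, MvPolynomial.eval₂_mul, hzero, mul_zero]
    obtain ⟨dy, hdymem, hdy1⟩ := hdy
    obtain ⟨dx, hdxmem, hdx0⟩ := hdx
    have hwdy : α * dy 0 = w := by
      have := hsupp dy hdymem; rw [hdy1, mul_zero, add_zero] at this; exact this
    have hwdx : β * dx 1 = w := by
      have := hsupp dx hdxmem; rw [hdx0, mul_zero, zero_add] at this; exact this
    have hγ : ∀ i j : ℕ, α * i + β * j = w →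
        γ0.coeff i = MvPolynomial.coeff (Finsupp.single 0 i + Finsupp.single 1 j) H := by
      intro i j hij
      have hc := subst2_coeff α β hβ H i j
      rw [hij, ← hsHdef, hsH, Polynomial.coeff_C_mul_X_pow, if_pos rfl] at hc
      exact hc
    have hsingle : ∀ (d : Fin 2 →₀ ℕ) (i j : ℕ), d 0 = i → d 1 = j →
        (Finsupp.single 0 i + Finsupp.single 1 j : Fin 2 →₀ ℕ) = d := by
      rintro d i j rfl rfl; ext x; fin_cases x <;> simp [Finsupp.single_apply]
    have hγ0coeff0 : γ0.coeff 0 ≠ 0 := by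
      have h1 := hγ 0 (dx 1) (by rw [mul_zero, zero_add, hwdx])
      rw [hsingle dx 0 (dx 1) hdx0 rfl] at h1
      rw [h1]
      exact MvPolynomial.mem_support_iff.mp hdxmem
    have hγbig : ∃ i, 1 ≤ i ∧ γ0.coeff i ≠ 0 := by
      rcases Nat.eq_zero_or_pos (dy 0) with h0 | hpos
      · have hw0 : w = 0 := by rw [← hwdy, h0, mul_zero]
        have hnz := hsupp dnz hdnzmem
        rw [hw0] at hnz
        have hd1z : dnz 1 = 0 := by
          rcases Nat.eq_zero_or_pos (dnz 1) with h | h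
          · exact h
          · exfalso; nlinarith
        have hd0pos : 1 ≤ dnz 0 := by
          rcases Nat.eq_zero_or_pos (dnz 0) with h | h
          · exfalso
            apply hdnzne
            ext x; fin_cases x
            · simpa using h
            · simpa using hd1z
          · exact h
        refine ⟨dnz 0, hd0pos, ?_⟩
        have hαz : α * dnz 0 = 0 := by omega
        have h1 := hγ (dnz 0) 0 (by rw [mul_zero, add_zero, hαz, hw0])
        rw [hsingle dnz (dnz 0) 0 rfl hd1z] at h1
        rw [h1]
        exact MvPolynomial.mem_support_iff.mp hdnzmem
      · refine ⟨dy 0, hpos, ?_⟩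
        have h1 := hγ (dy 0) 0 (by rw [mul_zero, add_zero, hwdy])
        rw [hsingle dy (dy 0) 0 rfl hdy1] at h1
        rw [h1]
        exact MvPolynomial.mem_support_iff.mp hdymem
    obtain ⟨i1, hi1, hγi1⟩ := hγbig
    have hγdeg : γ0.degree ≠ 0 := by
      intro hdeg0
      have h1 := Polynomial.le_natDegree_of_ne_zero hγi1
      have h2 : γ0.natDegree = 0 :=
        Polynomial.natDegree_eq_zero_iff_degree_le_zero.mpr (le_of_eq hdeg0)
      omega
    obtain ⟨x0, hx0root⟩ := IsAlgClosed.exists_root γ0 hγdeg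
    have hx0ne : x0 ≠ 0 := by
      rintro rfl
      apply hγ0coeff0
      rw [Polynomial.coeff_zero_eq_eval_zero]
      exact hx0root
    have hΦ : (MvPolynomial.eval ![x0, (1:k)] : MvPolynomial (Fin 2) k →+* k)
        = ((Polynomial.evalRingHom x0).comp
            (Polynomial.evalRingHom (1 : Polynomial k))).comp (subst2 α β) := by
      apply MvPolynomial.ringHom_ext
      · intro c
        simp [subst2]
      · intro i
        fin_cases i <;> simp [subst2]
    have hevalH : MvPolynomial.eval ![x0, (1:k)] H = 0 := by
      rw [hΦ]
      simp only [RingHom.comp_apply]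
      rw [← hsHdef, hsH]
      show Polynomial.eval x0 (Polynomial.eval (1 : Polynomial k)
        (Polynomial.C γ0 * Polynomial.X ^ w)) = 0
      simp only [Polynomial.eval_mul, Polynomial.eval_pow, Polynomial.eval_C,
        Polynomial.eval_X, one_pow, mul_one]
      exact hx0root
    refine ⟨x0, hx0ne, fun lam => ?_⟩
    have hs := scale_eval α β w H hsupp x0 1 lam
    rw [hevalH, mul_zero] at hs
    have hvec : (![lam ^ α * x0, lam ^ β] : Fin 2 → k) = ![lam ^ α * x0, lam ^ β * 1] := by
      funext i; fin_cases i <;> simp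
    rw [hFGH, map_mul, hvec, hs, mul_zero]

open MvPolynomial in
lemma Q_zero {k : Type*} [Field k] [CharZero k] (a b x0 : k) (n m r s α β : ℕ)
    (hall : ∀ lam : k, MvPolynomial.eval ![lam ^ α * x0, lam ^ β]
      ((X 0) ^ n + C a * (X 0) ^ r * (X 1) ^ s + C b * (X 1) ^ m : MvPolynomial (Fin 2) k)
        = 0) :
    (Polynomial.C (x0 ^ n) * Polynomial.X ^ (α * n)
      + Polynomial.C (a * x0 ^ r) * Polynomial.X ^ (α * r + β * s)
      + Polynomial.C b * Polynomial.X ^ (β * m) : Polynomial k) = 0 := by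
  apply Polynomial.zero_of_eval_zero
  intro lam
  have h := hall lam
  simp only [map_add, map_mul, map_pow, MvPolynomial.eval_C, MvPolynomial.eval_X,
    Matrix.cons_val_zero, Matrix.cons_val_one, Matrix.head_cons] at h
  simp only [Polynomial.eval_add, Polynomial.eval_mul, Polynomial.eval_pow,
    Polynomial.eval_C, Polynomial.eval_X]
  linear_combination h



open MvPolynomial

/-- Over an algebraically closed field of characteristic 0, the trinomial
`X^n + a·X^r·Y^s + b·Y^m` with `a, b ≠ 0`, `n, m ≥ 1`, `r, s ≥ 0` and
`nm − rm − sn ≠ 0` is irreducible in `k[X, Y]`. -/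
theorem stmt_1 {k : Type*} [Field k] [IsAlgClosed k] [CharZero k]
    (a b : k) (ha : a ≠ 0) (hb : b ≠ 0)
    (n m r s : ℕ) (hn : 1 ≤ n) (hm : 1 ≤ m)
    (hΔ : (n : ℤ) * m - r * m - s * n ≠ 0) :
    Irreducible ((X 0) ^ n + C a * (X 0) ^ r * (X 1) ^ s + C b * (X 1) ^ m :
      MvPolynomial (Fin 2) k) := by
  set F : MvPolynomial (Fin 2) k :=
    (X 0) ^ n + C a * (X 0) ^ r * (X 1) ^ s + C b * (X 1) ^ m with hFdef
  have hne : r * m + s * n ≠ n * m := by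
    intro h
    apply hΔ
    have := congrArg (Nat.cast : ℕ → ℤ) h
    push_cast at this
    linarith
  -- the two evaluation nonvanishing facts
  have hFy : MvPolynomial.eval₂ Polynomial.C ![Polynomial.X, 0] F ≠ 0 := by
    have hev : MvPolynomial.eval₂ Polynomial.C ![Polynomial.X, 0] F
        = Polynomial.X ^ n + Polynomial.C a * Polynomial.X ^ r * 0 ^ s := by
      simp [hFdef, MvPolynomial.eval₂_add, MvPolynomial.eval₂_mul, MvPolynomial.eval₂_pow,
        zero_pow (by omega : m ≠ 0)]
    rw [hev]
    rcases Nat.eq_zero_or_pos s with rfl | hs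
    · have hrn : r ≠ n := by
        intro h; apply hne; rw [h]; ring
      intro h0
      have hc : (Polynomial.X ^ n + Polynomial.C a * Polynomial.X ^ r * (0:Polynomial k) ^ 0).coeff n = 1 := by
        rw [pow_zero, mul_one, Polynomial.coeff_add, Polynomial.coeff_X_pow, if_pos rfl,
          Polynomial.coeff_C_mul_X_pow, if_neg (Ne.symm hrn)]
        norm_num
      rw [h0] at hc
      simp at hc
    · rw [zero_pow (by omega : s ≠ 0), mul_zero, add_zero]
      exact pow_ne_zero _ Polynomial.X_ne_zero
  have hFx : MvPolynomial.eval₂ Polynomial.C ![0, Polynomial.X] F ≠ 0 := by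
    have hev : MvPolynomial.eval₂ Polynomial.C ![0, Polynomial.X] F
        = Polynomial.C a * 0 ^ r * Polynomial.X ^ s + Polynomial.C b * Polynomial.X ^ m := by
      simp [hFdef, MvPolynomial.eval₂_add, MvPolynomial.eval₂_mul, MvPolynomial.eval₂_pow,
        zero_pow (by omega : n ≠ 0)]
    rw [hev]
    rcases Nat.eq_zero_or_pos r with rfl | hr
    · have hsm : s ≠ m := by
        intro h; apply hne; rw [h]; ring
      intro h0
      have hc : ((Polynomial.C a * (0:Polynomial k) ^ 0 * Polynomial.X ^ s
          + Polynomial.C b * Polynomial.X ^ m)).coeff m = b := by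
        rw [pow_zero, mul_one, Polynomial.coeff_add, Polynomial.coeff_C_mul_X_pow,
          Polynomial.coeff_C_mul_X_pow, if_neg (Ne.symm hsm), if_pos rfl, zero_add]
      rw [h0] at hc
      simp at hc
      exact hb hc.symm
    · rw [zero_pow (by omega : r ≠ 0), mul_zero, zero_mul, zero_add]
      exact mul_ne_zero (Polynomial.C_ne_zero.mpr hb) (pow_ne_zero _ Polynomial.X_ne_zero)
  -- package per case
  have pack : ∃ (α β E1 : ℕ) (W : Polynomial (Polynomial k)), 1 ≤ β ∧ Irreducible W ∧
      subst2 α β F = Polynomial.X ^ E1 * W ∧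
      ¬ (∃ x0 : k, x0 ≠ 0 ∧ ∀ lam : k,
        MvPolynomial.eval ![lam ^ α * x0, lam ^ β] F = 0) := by
    rcases lt_or_gt_of_ne hne with hlt | hgt
    · -- Δ > 0 : r*m + s*n < n*m ; pairing (b)
      have hrn : r < n := by
        by_contra hc
        push_neg at hc
        have := Nat.mul_le_mul_right m hc
        omega
      obtain ⟨u, hu1, hu⟩ : ∃ u, 1 ≤ u ∧ n = r + u := ⟨n - r, by omega, by omega⟩
      have hnm : n * m = r * m + u * m := by rw [hu]; ring
      obtain ⟨D, hD, hD1⟩ : ∃ D, u * m = s * n + D ∧ 1 ≤ D :=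
        ⟨u * m - s * n, by omega, by omega⟩
      obtain ⟨q, hqpr, hqf, hq2f, hqX⟩ := exists_good_prime u hu1 a ha
      set c0 : Polynomial k := Polynomial.X ^ n + Polynomial.C a * Polynomial.X ^ r with hc0
      have hc0eq : c0 = Polynomial.X ^ r * (Polynomial.X ^ u + Polynomial.C a) := by
        rw [hc0, hu, pow_add]; ring
      have hqc : q ∣ c0 := by rw [hc0eq]; exact hqf.mul_left _
      have hcop : IsCoprime q (Polynomial.X : Polynomial k) :=
        (hqpr.coprime_iff_not_dvd).mpr hqX
      have hq2 : ¬ q * q ∣ c0 := by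
        intro h
        rw [hc0eq] at h
        exact hq2f (((hcop.mul_left hcop).pow_right).dvd_of_dvd_mul_left h)
      have hqe : ¬ q ∣ Polynomial.C b := fun h =>
        hqpr.not_isUnit (isUnit_of_dvd_unit h (Polynomial.isUnit_C.mpr hb.isUnit))
      have hprim : ∀ p : Polynomial k, p ∣ Polynomial.C b → p ∣ c0 → IsUnit p := fun p hp _ =>
        isUnit_of_dvd_unit hp (Polynomial.isUnit_C.mpr hb.isUnit)
      have hirrW := binom_irred (Polynomial.C b) c0 q hqpr hqc hq2 hqe hprim D hD1
        (Polynomial.C_ne_zero.mpr hb)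
      refine ⟨s, u, s * n, _, hu1, hirrW, ?_, ?_⟩
      · rw [hFdef, subst2_trinomial]
        rw [show s * r + u * s = s * n by rw [hu]; ring, show u * m = s * n + D from hD,
          pow_add, hc0, map_add]
        ring
      · rintro ⟨x0, hx0, hall⟩
        have hQ := Q_zero a b x0 n m r s s u (by rw [hFdef] at hall; exact hall)
        have hc := congrArg (fun p => Polynomial.coeff p (u * m)) hQ
        simp only [Polynomial.coeff_add, Polynomial.coeff_C_mul_X_pow,
          Polynomial.coeff_zero] at hc
        rw [if_neg (by omega : ¬ u * m = s * n),
          if_neg (by rw [show s * r + u * s = s * n by rw [hu]; ring]; omega)] at hc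
        have hc2 : b = 0 := by simpa using hc
        exact hb hc2
    · -- Δ < 0 : n*m < r*m + s*n ; pairing (a)
      obtain ⟨D, hD, hD1⟩ : ∃ D, r * m + s * n = n * m + D ∧ 1 ≤ D :=
        ⟨r * m + s * n - n * m, by omega, by omega⟩
      obtain ⟨q, hqpr, hqc, hq2, hqX⟩ := exists_good_prime n hn b hb
      set e0 : Polynomial k := Polynomial.C a * Polynomial.X ^ r with he0
      have hqe : ¬ q ∣ e0 := by
        intro h
        have h2 : q ∣ Polynomial.C a⁻¹ * (Polynomial.C a * Polynomial.X ^ r) := h.mul_left _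
        rw [← mul_assoc, ← Polynomial.C_mul, inv_mul_cancel₀ ha, Polynomial.C_1, one_mul] at h2
        exact hqX (hqpr.dvd_of_dvd_pow h2)
      have hprim : ∀ p : Polynomial k, p ∣ e0 →
          p ∣ Polynomial.X ^ n + Polynomial.C b → IsUnit p := by
        intro p hp1 hp2
        by_contra hpu
        have hpne : p ≠ 0 := by
          rintro rfl
          rw [zero_dvd_iff] at hp2
          exact (Polynomial.monic_X_pow_add_C b (by omega : n ≠ 0)).ne_zero hp2
        obtain ⟨q', hq'irr, hq'p⟩ := WfDvdMonoid.exists_irreducible_factor hpu hpne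
        have hq'e : q' ∣ e0 := hq'p.trans hp1
        have h2 : q' ∣ Polynomial.C a⁻¹ * (Polynomial.C a * Polynomial.X ^ r) := hq'e.mul_left _
        rw [← mul_assoc, ← Polynomial.C_mul, inv_mul_cancel₀ ha, Polynomial.C_1, one_mul] at h2
        have hq'X : q' ∣ Polynomial.X := hq'irr.prime.dvd_of_dvd_pow h2
        have hq'c : q' ∣ Polynomial.X ^ n + Polynomial.C b := hq'p.trans hp2
        have hq'b : q' ∣ Polynomial.C b := by
          have hx : q' ∣ Polynomial.X ^ n := hq'X.trans (dvd_pow_self _ (by omega))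
          have := dvd_sub hq'c hx
          simpa using this
        exact hq'irr.not_isUnit (isUnit_of_dvd_unit hq'b (Polynomial.isUnit_C.mpr hb.isUnit))
      have hirrW := binom_irred e0 (Polynomial.X ^ n + Polynomial.C b) q hqpr hqc hq2 hqe hprim
        D hD1 (mul_ne_zero (Polynomial.C_ne_zero.mpr ha) (pow_ne_zero _ Polynomial.X_ne_zero))
      refine ⟨m, n, n * m, _, hn, hirrW, ?_, ?_⟩
      · rw [hFdef, subst2_trinomial]
        rw [show m * r + n * s = n * m + D by rw [mul_comm m r, mul_comm n s]; omega,
          show m * n = n * m by ring, pow_add, map_add]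
        ring
      · rintro ⟨x0, hx0, hall⟩
        have hQ := Q_zero a b x0 n m r s m n (by rw [hFdef] at hall; exact hall)
        have hc := congrArg (fun p => Polynomial.coeff p (m * r + n * s)) hQ
        simp only [Polynomial.coeff_add, Polynomial.coeff_C_mul_X_pow,
          Polynomial.coeff_zero] at hc
        rw [if_neg (by rw [mul_comm m r, mul_comm n s, mul_comm m n]; omega
              : ¬ m * r + n * s = m * n),
          if_neg (by rw [mul_comm m r, mul_comm n s]; omega : ¬ m * r + n * s = n * m)] at hc
        have hc2 : a * x0 ^ r = 0 := by simpa using hc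
        rcases mul_eq_zero.mp hc2 with h | h
        · exact ha h
        · rcases Nat.eq_zero_or_pos r with rfl | hr
          · simp at h
          · exact hx0 (pow_eq_zero_iff (by omega : r ≠ 0) |>.mp h)
  obtain ⟨α, β, E1, W, hβ, hirrW, hsubstF, hcontra⟩ := pack
  have hWprime : Prime W := UniqueFactorizationMonoid.irreducible_iff_prime.mp hirrW
  constructor
  · intro hu
    have h2 := hu.map (subst2 α β)
    rw [hsubstF] at h2
    exact hirrW.not_isUnit (isUnit_of_mul_isUnit_right h2)
  · intro G H hF
    have hdvd : W ∣ subst2 α β G * subst2 α β H := by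
      rw [← map_mul, ← hF, hsubstF]
      exact dvd_mul_left W _
    rcases hWprime.2.2 _ _ hdvd with hdG | hdH
    · rcases aux_main α β E1 hβ F G H W hirrW hF hsubstF hdG hFy hFx with h | h
      · exact Or.inr h
      · exact absurd h hcontra
    · rcases aux_main α β E1 hβ F H G W hirrW (by rw [hF, mul_comm]) hsubstF hdH hFy hFx
        with h | h
      · exact Or.inl h
      · exact absurd h hcontra
end

section
/- Let n, m ≥ 1 and r, s ≥ 0 be integers and set Δ = |nm − rm − sn|; assume Δ ≠ 0. Then the set of pairs (p, q) ∈ (ZMod Δ) × (ZMod Δ) satisfying n·p = m·q and r·p = (m − s)·q (where n, m, r, m−s denote the images of these integers in ZMod Δ) has exactly Δ elements. -/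
open Matrix

/-- The index (as an additive subgroup) of the range of an integer 2×2 matrix with
nonzero determinant equals the absolute value of its determinant. -/
lemma index_range_mulVecLin (A : Matrix (Fin 2) (Fin 2) ℤ) (hA : A.det ≠ 0) :
    (LinearMap.range A.mulVecLin).toAddSubgroup.index = A.det.natAbs := by
  classical
  set N := LinearMap.range A.mulVecLin with hN
  have hinj : Function.Injective A.mulVecLin := by
    intro v w h
    have h' : A *ᵥ v = A *ᵥ w := h
    have h2 : A.adjugate *ᵥ (A *ᵥ v) = A.adjugate *ᵥ (A *ᵥ w) := by rw [h']
    simp only [mulVec_mulVec, adjugate_mul, smul_mulVec, one_mulVec] at h2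
    exact smul_right_injective (Fin 2 → ℤ) hA h2
  obtain ⟨k, snf⟩ := N.smithNormalForm (Pi.basisFun ℤ (Fin 2))
  have hne : N.toAddSubgroup.index ≠ 0 :=
    Int.submodule_toAddSubgroup_index_ne_zero_iff.mpr
      ⟨(LinearEquiv.ofInjective A.mulVecLin hinj).symm⟩
  have hk : k = 2 := by simpa using snf.toAddSubgroup_index_ne_zero_iff.mp hne
  subst hk
  have hbij : Function.Bijective snf.f := Finite.injective_iff_bijective.mp snf.f.injective
  let σ : Fin 2 ≃ Fin 2 := Equiv.ofBijective snf.f hbij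
  have hidx : N.toAddSubgroup.index = ∏ i, (snf.a i).natAbs := by
    rw [snf.toAddSubgroup_index_eq_ite]
    simp [Ideal.span_singleton_toAddSubgroup_eq_zmultiples, Int.index_zmultiples]
  let e1 : (Fin 2 → ℤ) ≃ₗ[ℤ] N := LinearEquiv.ofInjective A.mulVecLin hinj
  let e2 : (Fin 2 → ℤ) ≃ₗ[ℤ] N := snf.bM.equiv snf.bN (Equiv.refl _)
  have h1 : N.subtype ∘ₗ (e1 : (Fin 2 → ℤ) →ₗ[ℤ] N) = A.mulVecLin := by
    ext v : 1
    rfl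
  have hdet1 : (LinearMap.det (N.subtype ∘ₗ (e1 : (Fin 2 → ℤ) →ₗ[ℤ] N))).natAbs
      = A.det.natAbs := by
    rw [h1]
    congr 1
    have : A.mulVecLin = Matrix.toLin' A := by ext v : 1; rfl
    rw [this, LinearMap.det_toLin']
  have hdet2 : (LinearMap.det (N.subtype ∘ₗ (e2 : (Fin 2 → ℤ) →ₗ[ℤ] N))).natAbs
      = ∏ i, (snf.a i).natAbs := by
    rw [← LinearMap.det_toMatrix snf.bM]
    have hmat : LinearMap.toMatrix snf.bM snf.bM
        (N.subtype ∘ₗ (e2 : (Fin 2 → ℤ) →ₗ[ℤ] N)) =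
        (Matrix.diagonal (snf.a ∘ σ.symm)).submatrix id σ := by
      ext i j
      rw [LinearMap.toMatrix_apply]
      have happ : (N.subtype ∘ₗ (e2 : (Fin 2 → ℤ) →ₗ[ℤ] N)) (snf.bM j)
          = snf.a j • snf.bM (σ j) := by
        show ((e2 (snf.bM j) : N) : Fin 2 → ℤ) = _
        rw [show e2 (snf.bM j) = snf.bN ((Equiv.refl (Fin 2)) j) from
          snf.bM.equiv_apply j snf.bN (Equiv.refl _)]
        exact snf.snf j
      rw [happ, LinearEquiv.map_smul, Module.Basis.repr_self, Finsupp.smul_single, smul_eq_mul,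
        mul_one]
      by_cases h : i = σ j
      · subst h
        simp [Matrix.submatrix_apply, Matrix.diagonal_apply, Finsupp.single_apply]
      · simp [Matrix.submatrix_apply, Matrix.diagonal_apply, Finsupp.single_apply, h,
          Ne.symm h]
    have hsign : ∀ u : ℤˣ, ((u : ℤ)).natAbs = 1 := by
      intro u; rcases Int.units_eq_one_or u with h | h <;> simp [h]
    have hprod : ((∏ i, (snf.a ∘ σ.symm) i)).natAbs = ∏ i, (snf.a (σ.symm i)).natAbs :=
      map_prod Int.natAbsHom _ Finset.univ
    rw [hmat, Matrix.det_permute' σ, det_diagonal, Int.natAbs_mul, hprod]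
    rcases Int.units_eq_one_or (Equiv.Perm.sign σ) with h | h <;> rw [h] <;>
      simp only [Units.val_one, Units.val_neg, Int.cast_one, Int.cast_neg,
        Int.natAbs_neg, Int.natAbs_one, one_mul] <;>
      exact Equiv.prod_comp σ.symm (fun i => (snf.a i).natAbs)
  have hassoc := LinearMap.associated_det_comp_equiv N.subtype e1 e2
  have := Int.natAbs_eq_iff_associated.mpr hassoc
  rw [hidx, ← hdet2, ← this, hdet1]

/-- Number of solutions of a homogeneous 2×2 linear system mod `D`, where the
determinant of the integer matrix has absolute value `D`. -/
lemma card_ker_matrix (D : ℕ) (hD : D ≠ 0) (A : Matrix (Fin 2) (Fin 2) ℤ)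
    (hdet : A.det.natAbs = D) :
    Nat.card {v : Fin 2 → ZMod D // (A.map (Int.cast : ℤ → ZMod D)) *ᵥ v = 0} = D := by
  haveI : NeZero D := ⟨hD⟩
  have hAne : A.det ≠ 0 := fun h => hD (by rw [← hdet, h]; rfl)
  set Ab := A.map (Int.cast : ℤ → ZMod D) with hAb
  let ψ : (Fin 2 → ZMod D) →+ (Fin 2 → ZMod D) := Ab.mulVecLin.toAddMonoidHom
  let f : ℤ →+* ZMod D := Int.castRingHom (ZMod D)
  let φ : (Fin 2 → ℤ) →+ (Fin 2 → ZMod D) := f.toAddMonoidHom.compLeft (Fin 2)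
  have hφ : ∀ v i, φ v i = ((v i : ℤ) : ZMod D) := fun v i => rfl
  have hφsurj : Function.Surjective φ := by
    intro v
    refine ⟨fun i => (v i).val, funext fun i => ?_⟩
    rw [hφ]
    simp [ZMod.intCast_cast, ZMod.natCast_val]
  have hcomm : ∀ w : Fin 2 → ℤ, ψ (φ w) = φ (A *ᵥ w) := by
    intro w
    show Ab *ᵥ (φ w) = φ (A *ᵥ w)
    funext i
    exact (RingHom.map_mulVec f A w i).symm
  have hDmem : ∀ u : Fin 2 → ℤ, (D : ℤ) • u ∈ LinearMap.range A.mulVecLin := by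
    intro u
    have hdu : A.det • u ∈ LinearMap.range A.mulVecLin := by
      refine ⟨A.adjugate *ᵥ u, ?_⟩
      show A *ᵥ (A.adjugate *ᵥ u) = A.det • u
      rw [mulVec_mulVec, mul_adjugate, smul_mulVec, one_mulVec]
    rcases Int.natAbs_eq A.det with h | h
    · rw [← hdet, ← h]; exact hdu
    · have heq : (D : ℤ) • u = -(A.det • u) := by
        rw [← hdet]
        conv_rhs => rw [h]
        rw [neg_smul, neg_neg]
      rw [heq]
      exact neg_mem hdu
  have hcomap : AddSubgroup.comap φ ψ.range = (LinearMap.range A.mulVecLin).toAddSubgroup := by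
    ext v
    constructor
    · rintro ⟨u, hu⟩
      obtain ⟨w, rfl⟩ := hφsurj u
      rw [hcomm w] at hu
      have : φ (v - A *ᵥ w) = 0 := by rw [map_sub, hu, sub_self]
      have hdvd : ∀ i, (D : ℤ) ∣ (v - A *ᵥ w) i := by
        intro i
        have := congrFun this i
        rw [hφ] at this
        exact (ZMod.intCast_zmod_eq_zero_iff_dvd _ _).mp this
      choose u' hu' using hdvd
      have hv : v = A *ᵥ w + (D : ℤ) • u' := by
        funext i
        have := hu' i
        simp only [Pi.sub_apply] at this
        simp only [Pi.add_apply, Pi.smul_apply, smul_eq_mul]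
        omega
      rw [hv]
      exact add_mem (Submodule.mem_toAddSubgroup _ |>.mpr ⟨w, rfl⟩)
        (Submodule.mem_toAddSubgroup _ |>.mpr (hDmem u'))
    · rintro ⟨w, rfl⟩
      exact ⟨φ w, hcomm w⟩
  have hcard2 : Nat.card (Fin 2 → ZMod D) = D * D := by
    rw [Nat.card_pi]
    simp only [Nat.card_zmod, Finset.prod_const, Finset.card_univ, Fintype.card_fin]
    ring
  have hrangeidx : ψ.range.index = D := by
    rw [← AddSubgroup.index_comap_of_surjective ψ.range hφsurj, hcomap,
      index_range_mulVecLin A hAne, hdet]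
  have hrange_card_ne : Nat.card ψ.range ≠ 0 := Nat.card_pos.ne'
  have hker : Nat.card ψ.ker * Nat.card ψ.range = D * D := by
    rw [← AddSubgroup.index_ker ψ, AddSubgroup.card_mul_index, hcard2]
  have hrange2 : ψ.range.index * Nat.card ψ.range = D * D := by
    rw [AddSubgroup.index_mul_card, hcard2]
  have hcardker : Nat.card ψ.ker = D := by
    have := hker.trans hrange2.symm
    rw [hrangeidx] at this
    exact Nat.eq_of_mul_eq_mul_right (Nat.pos_of_ne_zero hrange_card_ne) this
  refine (Nat.card_congr (Equiv.subtypeEquivRight fun v => ?_)).trans hcardker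
  exact Iff.rfl

/-- For integers `n, m ≥ 1`, `r, s ≥ 0` with `Δ = |nm − rm − sn| ≠ 0`,
the set of pairs `(p, q) ∈ (ZMod Δ)²` with `n·p = m·q` and `r·p = (m − s)·q`
has exactly `Δ` elements. -/
theorem stmt_2 (n m r s : ℕ) (hn : 1 ≤ n) (hm : 1 ≤ m)
    (Δ : ℕ) (hΔdef : Δ = ((n : ℤ) * m - r * m - s * n).natAbs) (hΔ : Δ ≠ 0) :
    Nat.card {pq : ZMod Δ × ZMod Δ //
      (n : ZMod Δ) * pq.1 = (m : ZMod Δ) * pq.2 ∧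
      (r : ZMod Δ) * pq.1 = (((m : ℤ) - (s : ℤ) : ℤ) : ZMod Δ) * pq.2} = Δ := by
  haveI : NeZero Δ := ⟨hΔ⟩
  set A : Matrix (Fin 2) (Fin 2) ℤ := !![(n : ℤ), -(m : ℤ); (r : ℤ), (s : ℤ) - (m : ℤ)] with hA
  have hdet : A.det.natAbs = Δ := by
    rw [hA, Matrix.det_fin_two_of, hΔdef]
    have : (n : ℤ) * ((s : ℤ) - m) - (-(m : ℤ)) * r = -((n : ℤ) * m - r * m - s * n) := by ring
    rw [this, Int.natAbs_neg]
  have key := card_ker_matrix Δ hΔ A hdet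
  refine Eq.trans (Nat.card_congr ?_) key
  refine Equiv.subtypeEquiv (finTwoArrowEquiv (ZMod Δ)).symm fun pq => ?_
  have hv : ∀ i, ((finTwoArrowEquiv (ZMod Δ)).symm pq) i = ![pq.1, pq.2] i := fun i => rfl
  rw [funext_iff, Fin.forall_fin_two]
  have e0 : ((A.map (Int.cast : ℤ → ZMod Δ)) *ᵥ ((finTwoArrowEquiv (ZMod Δ)).symm pq)) 0
      = (n : ZMod Δ) * pq.1 - (m : ZMod Δ) * pq.2 := by
    simp [Matrix.mulVec, dotProduct, Fin.sum_univ_two, hA, finTwoArrowEquiv]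
    push_cast
    ring
  have e1 : ((A.map (Int.cast : ℤ → ZMod Δ)) *ᵥ ((finTwoArrowEquiv (ZMod Δ)).symm pq)) 1
      = (r : ZMod Δ) * pq.1 - ((((m : ℤ) - (s : ℤ) : ℤ) : ZMod Δ)) * pq.2 := by
    simp [Matrix.mulVec, dotProduct, Fin.sum_univ_two, hA, finTwoArrowEquiv]
    push_cast
    ring
  rw [e0, e1]
  simp [sub_eq_zero]
end

section
/- Let k be a field, α ∈ k, and let u, v, w ∈ k satisfy v^2 = (α^3 + 1)·u^6 − 2·u^3 + 1 and w^3 = v + u^3 − 1, with w ≠ 0. Set z = w − α·u^2/w. Then z^3 + 3·α·z·u^2 − 2·(u^3 − 1) = 0. -/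
/-- If `v^2 = (α^3 + 1)·u^6 − 2·u^3 + 1`, `w^3 = v + u^3 − 1` and `w ≠ 0`,
then `z = w − α·u^2/w` satisfies `z^3 + 3·α·z·u^2 − 2·(u^3 − 1) = 0`. -/
theorem stmt_9 {k : Type*} [Field k] (α u v w : k) (hw : w ≠ 0)
    (hv : v ^ 2 = (α ^ 3 + 1) * u ^ 6 - 2 * u ^ 3 + 1)
    (hw3 : w ^ 3 = v + u ^ 3 - 1) :
    (w - α * u ^ 2 / w) ^ 3 + 3 * α * (w - α * u ^ 2 / w) * u ^ 2 - 2 * (u ^ 3 - 1) = 0 := by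
  field_simp
  linear_combination (w ^ 3 + v - u ^ 3 + 1) * hw3 + hv
end

section
/- Let k be a field of characteristic 0. Work in the ring (k[u])[t] of polynomials in t with coefficients in k[u]. Let P, Q ∈ (k[u])[t] be such that every coefficient of P (an element of k[u]) has degree at most 3 and every coefficient of Q has degree at most 2. Let F ∈ k[u] be squarefree of degree 6, and suppose P^2 − Q^3 = C(F), the constant polynomial in t with value F. Then there exist p, q ∈ k[u] with P = C(p) and Q = C(q); that is, P and Q are constant in t. -/
open Polynomial

/-- Over a field `k` of characteristic 0, if `P, Q ∈ (k[u])[t]` have all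
`t`-coefficients of `u`-degree at most `3` resp. `2`, and `P^2 − Q^3` is the constant
(in `t`) polynomial given by a squarefree sextic `F ∈ k[u]`, then `P` and `Q` are
constant in `t`. -/
theorem stmt_15 {k : Type*} [Field k] [CharZero k]
    (P Q : Polynomial (Polynomial k))
    (hP : ∀ i, (P.coeff i).natDegree ≤ 3)
    (hQ : ∀ i, (Q.coeff i).natDegree ≤ 2)
    (F : Polynomial k) (hF : Squarefree F) (hFdeg : F.natDegree = 6)
    (hrep : P ^ 2 - Q ^ 3 = C F) :
    ∃ p q : Polynomial k, P = C p ∧ Q = C q := by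
  classical
  set K := FractionRing (Polynomial k)
  let f : Polynomial k →+* K := algebraMap _ _
  have hfinj : Function.Injective f := IsFractionRing.injective _ _
  haveI : CharZero K := charZero_of_injective_algebraMap hfinj
  have hF0 : F ≠ 0 := by
    intro h; rw [h] at hFdeg; simp at hFdeg
  have hc0 : f F ≠ 0 := fun h => hF0 (hfinj (by simpa using h))
  set Pb := P.map f with hPb
  set Qb := Q.map f with hQb
  have hrepK : Pb ^ 2 - Qb ^ 3 = C (f F) := by
    have := congrArg (Polynomial.map f) hrep
    simpa [Polynomial.map_sub, Polynomial.map_pow, Polynomial.map_C] using this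
  -- coprimality
  have hco : IsCoprime Pb Qb := by
    refine ⟨C (f F)⁻¹ * Pb, -(C (f F)⁻¹ * Qb ^ 2), ?_⟩
    have : C (f F)⁻¹ * C (f F) = 1 := by
      rw [← C_mul, inv_mul_cancel₀ hc0, C_1]
    calc C (f F)⁻¹ * Pb * Pb + -(C (f F)⁻¹ * Qb ^ 2) * Qb
        = C (f F)⁻¹ * (Pb ^ 2 - Qb ^ 3) := by ring
      _ = 1 := by rw [hrepK, this]
  -- derivative
  have hder : C (2 : K) * Pb * derivative Pb = C (3 : K) * Qb ^ 2 * derivative Qb := by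
    have := congrArg derivative hrepK
    rw [derivative_sub, derivative_pow, derivative_pow, derivative_C, sub_eq_zero] at this
    simpa [pow_one] using this
  have hdvd : Pb ∣ derivative Qb := by
    have h1 : Pb ∣ C (3 : K) * Qb ^ 2 * derivative Qb := ⟨C (2 : K) * derivative Pb, by
      rw [← hder]; ring⟩
    have h2 : Pb ∣ Qb ^ 2 * derivative Qb := by
      have h3 : (3 : K) ≠ 0 := three_ne_zero
      obtain ⟨e, he⟩ := h1
      exact ⟨C (3 : K)⁻¹ * e, by
        have : C (3:K)⁻¹ * (C (3:K) * Qb ^ 2 * derivative Qb) = Qb ^ 2 * derivative Qb := by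
          rw [show C (3:K)⁻¹ * (C (3:K) * Qb ^ 2 * derivative Qb)
              = (C (3:K)⁻¹ * C (3:K)) * (Qb ^ 2 * derivative Qb) by ring,
            ← C_mul, inv_mul_cancel₀ h3, C_1, one_mul]
        rw [← this, he]; ring⟩
    exact (hco.pow_right (n := 2)).dvd_of_dvd_mul_left h2
  by_cases hQ' : derivative Qb = 0
  · -- Q is constant
    have hdQ : derivative Q = 0 := by
      have : (derivative Q).map f = 0 := by rw [← derivative_map]; exact hQ'
      exact (Polynomial.map_eq_zero_iff hfinj).mp this
    have hQdeg : Q.natDegree = 0 := natDegree_eq_zero_of_derivative_eq_zero hdQ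
    have hQC : Q = C (Q.coeff 0) := (Polynomial.eq_C_of_natDegree_eq_zero hQdeg)
    have hP2 : P ^ 2 = C (F + (Q.coeff 0) ^ 3) := by
      rw [C_add, C_pow, ← hQC, ← hrep]; ring
    have hPdeg : P.natDegree = 0 := by
      have : (P ^ 2).natDegree = 2 * P.natDegree := natDegree_pow P 2
      rw [hP2, natDegree_C] at this
      omega
    exact ⟨P.coeff 0, Q.coeff 0, Polynomial.eq_C_of_natDegree_eq_zero hPdeg, hQC⟩
  · exfalso
    set m := Pb.natDegree
    set n := Qb.natDegree
    have hn0 : n ≠ 0 := by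
      intro h
      exact hQ' (by rw [Polynomial.eq_C_of_natDegree_eq_zero h, derivative_C])
    have hmn : 2 * m = 3 * n := by
      by_contra hne
      have h2m : (Pb ^ 2).natDegree = 2 * m := natDegree_pow Pb 2
      have h3n : (Qb ^ 3).natDegree = 3 * n := natDegree_pow Qb 3
      rcases lt_or_gt_of_ne hne with h | h
      · have := Polynomial.natDegree_sub_eq_right_of_natDegree_lt
          (p := Pb ^ 2) (q := Qb ^ 3) (by rw [h2m, h3n]; exact h)
        rw [hrepK, natDegree_C, h3n] at this
        omega
      · have := Polynomial.natDegree_sub_eq_left_of_natDegree_lt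
          (p := Pb ^ 2) (q := Qb ^ 3) (by rw [h2m, h3n]; exact h)
        rw [hrepK, natDegree_C, h2m] at this
        omega
    have hle : m ≤ (derivative Qb).natDegree := Polynomial.natDegree_le_of_dvd hdvd hQ'
    have hlt : (derivative Qb).natDegree < n := Polynomial.natDegree_derivative_lt hn0
    omega
end
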